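/- Let C be a counter machine and ℂ the Σ_C-Nmatrix induced by C. For all a, b ∈ ℕ_0, if a ≠ b+1 then there exists a valuation v ∈ Val(ℂ) such that v(enc(a)) ∉ succ_ℂ(v(enc(b))). -/

import Mathlib

/-!
Any `f : ℕ → CMNum` with `f 0 ∈ zeroNum` and `f (k + 1) ∈ succNum (f k)` is realised on the
numerals by a valuation: the numerals are closed under subformulas, so sending `enc C k` to
`num (f k)` and choosing admissible values everywhere else is a valuation. It therefore suffices to
find such an `f` with `f a ∉ succNum (f b)`. For `a = 0` take `r0, ge1, ge2, ge2, …`, since `r0`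
is no successor. Otherwise take `ge0` up to a threshold `t`, then `ge1`, then `ge2` forever: if
`a ≤ b` put `t = a - 1`, so that `f a = ge1` while `f b ∈ {ge1, ge2}`; if `a ≥ b + 2` put `t = b`,
so that `f b = ge0` while `f a = ge2`.
-/

structure Signature where
  Conn : Type
  arity : Conn → ℕ

inductive Fm (S : Signature) : Type where
  | var : ℕ → Fm S
  | app : (c : S.Conn) → (Fin (S.arity c) → Fm S) → Fm S

def Fm.subst {S : Signature} (σ : ℕ → Fm S) : Fm S → Fm S
  | .var i => σ i
  | .app c args => .app c (fun j => (args j).subst σ)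

def Fm.varsLT {S : Signature} (n : ℕ) : Fm S → Prop
  | .var i => i < n
  | .app _ args => ∀ j, (args j).varsLT n

structure NMatrix (S : Signature) (V : Type) where
  D : Set V
  interp : (c : S.Conn) → (Fin (S.arity c) → V) → Set V
  interp_nonempty : ∀ c args, (interp c args).Nonempty

def IsVal {S : Signature} {V : Type} (M : NMatrix S V) (v : Fm S → V) : Prop :=
  ∀ (c : S.Conn) (args : Fin (S.arity c) → Fm S),
    v (Fm.app c args) ∈ M.interp c (fun i => v (args i))

def Entails {S : Signature} {V : Type} (M : NMatrix S V) (Γ : Set (Fm S)) (A : Fm S) : Prop :=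
  ∀ v, IsVal M v → (∀ B ∈ Γ, v B ∈ M.D) → v A ∈ M.D

def Interderiv {S : Signature} {V : Type} (M : NMatrix S V) (A B : Fm S) : Prop :=
  Entails M {A} B ∧ Entails M {B} A

def Deterministic {S : Signature} {V : Type} (M : NMatrix S V) : Prop :=
  ∀ c args, ∃ x, M.interp c args = {x}

inductive CMNum : Type where
  | r0 | ge0 | ge1 | ge2
deriving DecidableEq

inductive CMInstr (n : ℕ) (Q : Type) : Type where
  | inc : Fin n → Q → CMInstr n Q
  | dec : Fin n → Q → Q → CMInstr n Q

structure CounterMachine where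
  n : ℕ
  Q : Type
  finQ : Finite Q
  qinit : Q
  δ : Q → Option (CMInstr n Q)

inductive CMVal (C : CounterMachine) : Type where
  | num : CMNum → CMVal C
  | conf : C.Q → (Fin C.n → CMNum) → CMVal C
  | init : CMVal C
  | error : CMVal C

inductive CMConn (C : CounterMachine) : Type where
  | zero : CMConn C
  | eps : CMConn C
  | succ : CMConn C
  | step : C.Q → CMConn C

def CMSig (C : CounterMachine) : Signature where
  Conn := CMConn C
  arity := fun c => match c with
    | .zero => 0
    | .eps => 0
    | .succ => 1
    | .step _ => C.n + 1

/-- Interpretation of `succ` on abstract numbers. -/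
def zeroNum : Set CMNum := {.r0, .ge0}

def succNum : CMNum → Set CMNum
  | .r0 => {.ge1}
  | .ge0 => {.ge0, .ge1}
  | .ge1 => {.ge2}
  | .ge2 => {.ge2}

/-- Interpretation of `succ` in the Nmatrix induced by `C`. -/
def succC (C : CounterMachine) : CMVal C → Set (CMVal C)
  | .num x => CMVal.num '' succNum x
  | _ => {.error}

/-- Interpretation of `zero` in the Nmatrix induced by `C`. -/
def zeroC (C : CounterMachine) : Set (CMVal C) := {.num .r0, .num .ge0}

/-- The condition under which `step^q` applied to `x` and a tuple of numbers `zn`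
produces the configuration value `conf q zn`. -/
def stepOK (C : CounterMachine) (q : C.Q) (x : CMVal C) (zn : Fin C.n → CMNum) : Prop :=
  (x = CMVal.init ∧ q = C.qinit ∧ ((∀ i, zn i = .r0) ∨ (∀ i, zn i = .ge0))) ∨
  (∃ (q' : C.Q) (yn : Fin C.n → CMNum), x = CMVal.conf q' yn ∧
    ((∃ i, C.δ q' = some (.inc i q) ∧ zn i ∈ succNum (yn i) ∧ ∀ l, l ≠ i → zn l = yn l) ∨
     (∃ i s, C.δ q' = some (.dec i q s) ∧ yn i ∈ succNum (zn i) ∧ ∀ l, l ≠ i → zn l = yn l) ∨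
     (∃ i s, C.δ q' = some (.dec i s q) ∧ yn i ∈ zeroNum ∧ zn = yn)))

/-- Interpretation of `step^q` in the Nmatrix induced by `C`. -/
def stepC (C : CounterMachine) (q : C.Q) (x : CMVal C) (z : Fin C.n → CMVal C) :
    Set (CMVal C) :=
  { w | (∃ zn : Fin C.n → CMNum, (∀ i, z i = .num (zn i)) ∧ stepOK C q x zn ∧
          w = .conf q zn) ∨
        (¬ (∃ zn : Fin C.n → CMNum, (∀ i, z i = .num (zn i)) ∧ stepOK C q x zn) ∧
          w = .error) }

lemma succC_nonempty (C : CounterMachine) (x : CMVal C) : (succC C x).Nonempty := by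
  cases x with
  | num y =>
      cases y
      · exact ⟨.num .ge1, by simp [succC, succNum]⟩
      · exact ⟨.num .ge0, by simp [succC, succNum]⟩
      · exact ⟨.num .ge2, by simp [succC, succNum]⟩
      · exact ⟨.num .ge2, by simp [succC, succNum]⟩
  | conf q r => exact ⟨.error, rfl⟩
  | init => exact ⟨.error, rfl⟩
  | error => exact ⟨.error, rfl⟩

lemma stepC_nonempty (C : CounterMachine) (q : C.Q) (x : CMVal C)
    (z : Fin C.n → CMVal C) : (stepC C q x z).Nonempty := by
  by_cases h : ∃ zn : Fin C.n → CMNum, (∀ i, z i = .num (zn i)) ∧ stepOK C q x zn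
  · obtain ⟨zn, hz, hok⟩ := h
    exact ⟨.conf q zn, Or.inl ⟨zn, hz, hok, rfl⟩⟩
  · exact ⟨.error, Or.inr ⟨h, rfl⟩⟩

/-- The Nmatrix ℂ induced by the counter machine `C`. -/
def CMmatrix (C : CounterMachine) : NMatrix (CMSig C) (CMVal C) where
  D := { w | ∃ (q : C.Q) (r : Fin C.n → CMNum), w = CMVal.conf q r ∧ C.δ q = none }
  interp := fun c => match c with
    | .zero => fun _ => zeroC C
    | .eps => fun _ => {CMVal.init}
    | .succ => fun args => succC C (args ⟨0, Nat.one_pos⟩)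
    | .step q => fun args => stepC C q (args ⟨0, Nat.succ_pos _⟩) (fun i => args i.succ)
  interp_nonempty := by
    intro c args
    cases c with
    | zero => exact ⟨.num .r0, Or.inl rfl⟩
    | eps => exact ⟨.init, rfl⟩
    | succ => exact succC_nonempty C _
    | step q => exact stepC_nonempty C q _ _

/-- Encoding of natural numbers as closed formulas. -/
def enc (C : CounterMachine) : ℕ → Fm (CMSig C)
  | 0 => .app .zero (fun i => i.elim0)
  | a + 1 => .app .succ (fun _ => enc C a)
namespace NMatrix

variable {S : Signature} {V : Type} [Nonempty V]

noncomputable def extend (M : NMatrix S V) (g : Fm S → Option V) : Fm S → V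
  | .var i => (g (.var i)).getD (Classical.arbitrary V)
  | .app c args => (g (.app c args)).getD (M.interp_nonempty c fun i => M.extend g (args i)).some

theorem extend_eq_of_eq_some (M : NMatrix S V) {g : Fm S → Option V} {A : Fm S} {x : V}
    (hA : g A = some x) : M.extend g A = x := by
  cases A <;> simp [extend, hA]

theorem isVal_extend (M : NMatrix S V) {g : Fm S → Option V}
    (hg : ∀ c args x, g (.app c args) = some x →
      ∃ y, (∀ i, g (args i) = some (y i)) ∧ x ∈ M.interp c y) :
    IsVal M (M.extend g) := by
  intro c args
  cases hx : g (.app c args) with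
  | none =>
    simp only [extend, hx, Option.getD_none]
    exact Set.Nonempty.some_mem _
  | some x =>
    obtain ⟨y, hy, hxy⟩ := hg c args x hx
    rwa [extend_eq_of_eq_some M hx, show (fun i => M.extend g (args i)) = y from
      funext fun i => extend_eq_of_eq_some M (hy i)]

end NMatrix

def IsNumChain (f : ℕ → CMNum) : Prop :=
  f 0 ∈ zeroNum ∧ ∀ k, f (k + 1) ∈ succNum (f k)

def exactNumChain : ℕ → CMNum
  | 0 => .r0
  | 1 => .ge1
  | _ + 2 => .ge2

def thresholdNumChain (t k : ℕ) : CMNum :=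
  if k ≤ t then .ge0 else if k = t + 1 then .ge1 else .ge2

theorem isNumChain_exactNumChain : IsNumChain exactNumChain :=
  ⟨by simp [exactNumChain, zeroNum],
    fun k => by rcases k with _ | _ | k <;> simp [exactNumChain, succNum]⟩

theorem isNumChain_thresholdNumChain (t : ℕ) : IsNumChain (thresholdNumChain t) := by
  refine ⟨by simp [thresholdNumChain, zeroNum], fun k => ?_⟩
  unfold thresholdNumChain
  split_ifs <;> simp [succNum] <;> omega

theorem r0_not_mem_succNum (x : CMNum) : CMNum.r0 ∉ succNum x := by
  cases x <;> simp [succNum]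

theorem exists_isNumChain_not_mem_succNum {a b : ℕ} (h : a ≠ b + 1) :
    ∃ f, IsNumChain f ∧ f a ∉ succNum (f b) := by
  rcases a with _ | a
  · exact ⟨exactNumChain, isNumChain_exactNumChain, r0_not_mem_succNum _⟩
  rcases le_or_gt (a + 1) b with hab | hab
  · refine ⟨thresholdNumChain a, isNumChain_thresholdNumChain a, ?_⟩
    unfold thresholdNumChain
    split_ifs <;> simp [succNum] <;> omega
  · refine ⟨thresholdNumChain b, isNumChain_thresholdNumChain b, ?_⟩
    unfold thresholdNumChain
    split_ifs <;> simp [succNum] <;> omega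

instance (C : CounterMachine) : Nonempty (CMVal C) := ⟨.error⟩

def decodeNumeral {C : CounterMachine} : Fm (CMSig C) → Option ℕ
  | .app .zero _ => some 0
  | .app .succ args => (decodeNumeral (args ⟨0, Nat.one_pos⟩)).map (· + 1)
  | _ => none

theorem decodeNumeral_enc (C : CounterMachine) (k : ℕ) : decodeNumeral (enc C k) = some k := by
  induction k with
  | zero => rfl
  | succ k ih => simp [enc, decodeNumeral, ih]

noncomputable def numChainVal (C : CounterMachine) (f : ℕ → CMNum) : Fm (CMSig C) → CMVal C :=
  (CMmatrix C).extend fun A => (decodeNumeral A).map fun k => .num (f k)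

theorem numChainVal_enc (C : CounterMachine) (f : ℕ → CMNum) (k : ℕ) :
    numChainVal C f (enc C k) = .num (f k) :=
  NMatrix.extend_eq_of_eq_some _ (by simp [decodeNumeral_enc])

theorem isVal_numChainVal (C : CounterMachine) {f : ℕ → CMNum} (hf : IsNumChain f) :
    IsVal (CMmatrix C) (numChainVal C f) := by
  refine NMatrix.isVal_extend _ fun c args x hx => ?_
  cases c with
  | zero =>
    simp only [decodeNumeral, Option.map_some, Option.some.injEq] at hx
    refine ⟨fun i => (i : Fin 0).elim0, fun i => (i : Fin 0).elim0, ?_⟩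
    simpa [CMmatrix, zeroC, zeroNum, ← hx] using hf.1
  | succ =>
    obtain ⟨k, hk, rfl⟩ := Option.map_eq_some_iff.1 hx
    obtain ⟨j, hj, rfl⟩ := Option.map_eq_some_iff.1 hk
    refine ⟨fun _ => .num (f j), fun i => ?_, ?_⟩
    · obtain rfl : i = ⟨0, Nat.one_pos⟩ := Subsingleton.elim (α := Fin 1) _ _
      simp [hj]
    · exact Set.mem_image_of_mem _ (hf.2 j)
  | eps | step => simp [decodeNumeral] at hx

theorem num_mem_succC {C : CounterMachine} {x y : CMNum} :
    CMVal.num y ∈ succC C (.num x) ↔ y ∈ succNum x := by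
  simp [succC]

/-- For the Nmatrix ℂ induced by a counter machine C, if a ≠ b + 1 then there is
a valuation v with v(enc(a)) ∉ succ_ℂ(v(enc(b))). -/
theorem stmt_5 (C : CounterMachine) (a b : ℕ) (h : a ≠ b + 1) :
    ∃ v : Fm (CMSig C) → CMVal C, IsVal (CMmatrix C) v ∧
      v (enc C a) ∉ succC C (v (enc C b)) := by
  obtain ⟨f, hf, hab⟩ := exists_isNumChain_not_mem_succNum h
  refine ⟨numChainVal C f, isVal_numChainVal C hf, ?_⟩
  rwa [numChainVal_enc, numChainVal_enc, num_mem_succC]
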